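/- arXiv:1506.02308 — 4 statements merged into one kernel-verified Lean document; each statement's English description precedes it below -/
import Mathlib

section
/- Let G be a subgroup of ℤ^m and let G⁺ = G ∩ (ℤ^m)⁺ be the set of elements of G with all coordinates nonnegative. Then G⁺ is finitely generated as a (commutative, additive) semigroup (i.e., there is a finite subset of G⁺ such that every element of G⁺ is a finite sum of elements from that subset). -/
/-!
`G⁺` is the image, under the coordinatewise cast `ℕ^m → ℤ^m`, of the submonoid
`P = {n ∈ ℕ^m | n ∈ G}`. This `P` is subtractive (`n, n + k ∈ P` imply `k ∈ P`, since `G` is a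
group), and by Dickson's lemma `ℕ^m` is well-quasi-ordered; in a canonically ordered
well-quasi-ordered monoid every subtractive submonoid is generated by its finitely many minimal
nonzero elements.
-/

theorem AddMonoidHom.coe_mrange_natCast_compLeft (ι : Type*) :
    (AddMonoidHom.mrange ((Nat.castAddMonoidHom ℤ).compLeft ι) : Set (ι → ℤ)) = {x | 0 ≤ x} := by
  ext x
  refine ⟨?_, fun hx => ⟨fun i => (x i).toNat, funext fun i => Int.toNat_of_nonneg (hx i)⟩⟩
  rintro ⟨n, rfl⟩ i
  simp

namespace AddSubgroup

variable {ι : Type*}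

theorem fg_comap_natCast_compLeft [Finite ι] (G : AddSubgroup (ι → ℤ)) :
    (G.toAddSubmonoid.comap ((Nat.castAddMonoidHom ℤ).compLeft ι)).FG :=
  AddSubmonoid.fg_of_subtractive fun x hx y hxy => by
    simpa using G.sub_mem hxy hx

theorem coe_map_comap_natCast_compLeft (G : AddSubgroup (ι → ℤ)) :
    ((G.toAddSubmonoid.comap ((Nat.castAddMonoidHom ℤ).compLeft ι)).map
      ((Nat.castAddMonoidHom ℤ).compLeft ι) : Set (ι → ℤ)) = {x | x ∈ G ∧ 0 ≤ x} := by
  rw [AddSubmonoid.map_comap_eq, AddSubmonoid.coe_inf,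
    AddMonoidHom.coe_mrange_natCast_compLeft]
  rfl

end AddSubgroup

/-- The positive cone `G⁺ = G ∩ (ℤ^m)⁺` of a subgroup `G ≤ ℤ^m` is finitely generated
as an additive semigroup. -/
theorem stmt_0 (m : ℕ) (G : AddSubgroup (Fin m → ℤ)) :
    ∃ F : Finset (Fin m → ℤ),
      (↑F : Set (Fin m → ℤ)) ⊆ {x | x ∈ G ∧ 0 ≤ x} ∧
      ∀ x ∈ {x : Fin m → ℤ | x ∈ G ∧ 0 ≤ x},
        x ∈ AddSubmonoid.closure (↑F : Set (Fin m → ℤ)) := by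
  obtain ⟨F, hF⟩ := G.fg_comap_natCast_compLeft.map ((Nat.castAddMonoidHom ℤ).compLeft (Fin m))
  rw [← G.coe_map_comap_natCast_compLeft, ← hF]
  exact ⟨F, AddSubmonoid.subset_closure, fun _ => id⟩
end

section
/- Let P be an m × n matrix with integer entries, and let ξ ∈ ℝ^m have all entries nonnegative. Assume every entry of P ξ is rational. Then for any ε > 0 there exists ζ ∈ ℚ^m with all entries nonnegative such that P ζ = P ξ and ‖ξ − ζ‖_∞ < ε. -/
/-!
If a rational system `A x = c` has a real solution, it has a rational one, by duality. Fixing a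
rational generalized inverse `B` (with `A B A = A`), the continuous map
`y ↦ y + B (c - A y)` fixes every real solution and sends rational vectors to rational solutions,
so rational solutions accumulate at every real solution. Nonnegativity is then kept by adding the
equations `x i = 0` for the coordinates where `ξ` vanishes and staying close to `ξ` elsewhere.
-/

open Matrix Filter Topology

theorem LinearMap.exists_comp_comp_eq_self {K V W : Type*} [DivisionRing K] [AddCommGroup V]
    [Module K V] [AddCommGroup W] [Module K W] (f : V →ₗ[K] W) :
    ∃ g : W →ₗ[K] V, f ∘ₗ g ∘ₗ f = f := by
  obtain ⟨s, hs⟩ := f.rangeRestrict.exists_rightInverse_of_surjective f.range_rangeRestrict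
  obtain ⟨g, hg⟩ := LinearMap.exists_extend s
  refine ⟨g, LinearMap.ext fun v => ?_⟩
  have := congr($hs ⟨f v, LinearMap.mem_range_self f v⟩)
  simpa [← hg] using congr(Subtype.val $this)

theorem Matrix.exists_mul_mul_eq_self {ι κ K : Type*} [Fintype ι] [Fintype κ] [Field K]
    (A : Matrix ι κ K) : ∃ B : Matrix κ ι K, A * B * A = A := by
  classical
  obtain ⟨g, hg⟩ := (toLin' A).exists_comp_comp_eq_self
  refine ⟨LinearMap.toMatrix' g, toLin'.injective ?_⟩
  simpa [Matrix.toLin'_mul, LinearMap.comp_assoc] using hg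

theorem Matrix.mem_range_mulVecLin_of_map_mulVec_eq {ι κ K L : Type*} [Fintype ι] [Fintype κ]
    [Field K] [Field L] (φ : K →+* L) (A : Matrix ι κ K) (c : ι → K) (x : κ → L)
    (hx : A.map φ *ᵥ x = φ ∘ c) : c ∈ LinearMap.range A.mulVecLin := by
  classical
  by_contra hc
  obtain ⟨f, hfc, hf⟩ := Submodule.exists_dual_map_eq_bot_of_notMem hc inferInstance
  set r := (dotProductEquiv K ι).symm f
  have hf_apply (v : ι → K) : f v = r ⬝ᵥ v := by
    rw [← dotProductEquiv_apply_apply K ι r, LinearEquiv.apply_symm_apply]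
  have hrA : r ᵥ* A = 0 := by
    ext j
    have : f (A *ᵥ Pi.single j 1) = 0 :=
      Submodule.mem_bot K |>.mp <| hf.le <| Submodule.mem_map_of_mem ⟨_, rfl⟩
    rwa [hf_apply, mulVec_single_one] at this
  apply hfc
  apply φ.injective
  calc φ (f c) = (φ ∘ r) ⬝ᵥ (A.map φ *ᵥ x) := by rw [hf_apply, hx, φ.map_dotProduct]
    _ = (φ ∘ r ᵥ* A.map φ) ⬝ᵥ x := dotProduct_mulVec _ _ _
    _ = φ 0 := by
      rw [show φ ∘ r ᵥ* A.map φ = φ ∘ (r ᵥ* A) from funext fun j => (φ.map_vecMul A r j).symm,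
        hrA]
      simp

theorem Matrix.exists_rat_mulVec_eq_mem_of_mem_nhds {ι κ : Type*} [Fintype ι] [Fintype κ]
    (A : Matrix ι κ ℚ) (c : ι → ℚ) {x : κ → ℝ} (hx : A.map (↑) *ᵥ x = (↑) ∘ c)
    {U : Set (κ → ℝ)} (hU : U ∈ 𝓝 x) : ∃ q : κ → ℚ, A *ᵥ q = c ∧ (↑) ∘ q ∈ U := by
  obtain ⟨q₀, rfl⟩ : ∃ q₀, A *ᵥ q₀ = c :=
    A.mem_range_mulVecLin_of_map_mulVec_eq (Rat.castHom ℝ) c x hx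
  obtain ⟨B, hB⟩ := A.exists_mul_mul_eq_self
  set F : (κ → ℝ) → κ → ℝ := fun v => v + B.map (↑) *ᵥ ((↑) ∘ (A *ᵥ q₀) - A.map (↑) *ᵥ v)
  have hF : Continuous F := by fun_prop
  have hFx : F x = x := by simp [F, hx]
  obtain ⟨y, hy⟩ := (DenseRange.piMap fun _ => Rat.denseRange_cast).mem_nhds <|
    hF.continuousAt.preimage_mem_nhds (hFx ▸ hU)
  refine ⟨y + B *ᵥ (A *ᵥ q₀ - A *ᵥ y), ?_, ?_⟩
  · rw [mulVec_add, ← mulVec_sub, mulVec_mulVec, mulVec_mulVec, hB, mulVec_sub, add_sub_cancel]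
  · have hcast : ((↑) ∘ (y + B *ᵥ (A *ᵥ q₀ - A *ᵥ y)) : κ → ℝ) = F ((↑) ∘ y) := by
      ext i
      simp [F, mulVec, dotProduct]
    exact hcast ▸ hy

theorem eventually_forall_lt_of_lt {ι α : Type*} [Finite ι] [LinearOrder α] [TopologicalSpace α]
    [OrderTopology α] (a : α) (x : ι → α) : ∀ᶠ v in 𝓝 x, ∀ i, a < x i → a < v i := by
  refine eventually_all.2 fun i => ?_
  by_cases hi : a < x i
  · exact ((continuous_apply i).tendsto x).eventually (lt_mem_nhds hi) |>.mono fun _ h _ => h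
  · exact .of_forall fun _ h => absurd h hi

theorem Matrix.submatrix_one_mulVec {ι κ R : Type*} [Fintype κ] [DecidableEq κ]
    [NonAssocSemiring R] (f : ι → κ) (v : κ → R) :
    (1 : Matrix κ κ R).submatrix f id *ᵥ v = v ∘ f :=
  funext fun i => congrFun (one_mulVec v) (f i)

theorem Matrix.exists_nonneg_rat_mulVec_eq_near {ι κ : Type*} [Fintype ι] [Fintype κ]
    (A : Matrix ι κ ℚ) (c : ι → ℚ) {x : κ → ℝ} (hx₀ : ∀ i, 0 ≤ x i)
    (hx : A.map (↑) *ᵥ x = (↑) ∘ c) {ε : ℝ} (hε : 0 < ε) :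
    ∃ q : κ → ℚ, (∀ i, 0 ≤ q i) ∧ A *ᵥ q = c ∧ ∀ i, |x i - q i| < ε := by
  classical
  let E : Matrix {i // x i = 0} κ ℚ := (1 : Matrix κ κ ℚ).submatrix (↑) id
  have hEcast : E.map (↑) = (1 : Matrix κ κ ℝ).submatrix (↑) id := by
    rw [← submatrix_map, Matrix.map_one _ Rat.cast_zero Rat.cast_one]
  have hx' : (fromRows A E).map (↑) *ᵥ x = (↑) ∘ Sum.elim c 0 := by
    rw [fromRows_map, fromRows_mulVec, hEcast, submatrix_one_mulVec, hx]
    ext (j | i)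
    · rfl
    · simpa using i.2
  obtain ⟨q, hq, hqx, hq_pos⟩ := exists_rat_mulVec_eq_mem_of_mem_nhds _ _ hx'
    (inter_mem (Metric.ball_mem_nhds x hε) (eventually_forall_lt_of_lt 0 x))
  rw [fromRows_mulVec, submatrix_one_mulVec] at hq
  refine ⟨q, fun i => ?_, funext fun j => congrFun hq (.inl j), fun i => ?_⟩
  · rcases (hx₀ i).eq_or_lt with h | h
    · exact (congrFun hq (.inr ⟨i, h.symm⟩)).ge
    · exact Rat.cast_nonneg.mp (hq_pos i h).le
  · rw [abs_sub_comm]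
    exact (dist_pi_lt_iff hε).1 hqx i

/-- If `P` is an integer matrix, `ξ ∈ ℝ^m` has nonnegative entries, and every entry of `P ξ`
is rational, then `ξ` can be perturbed to a nonnegative rational vector `ζ` with `P ζ = P ξ`
and `‖ξ − ζ‖_∞ < ε`. -/
theorem stmt_3 (m n : ℕ) (P : Matrix (Fin n) (Fin m) ℤ) (ξ : Fin m → ℝ)
    (hξ : ∀ i, 0 ≤ ξ i)
    (hrat : ∀ j, ∃ q : ℚ, (P.map (Int.cast : ℤ → ℝ)).mulVec ξ j = (q : ℝ))
    (ε : ℝ) (hε : 0 < ε) :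
    ∃ ζ : Fin m → ℚ, (∀ i, 0 ≤ ζ i) ∧
      (P.map (Int.cast : ℤ → ℝ)).mulVec (fun i => (ζ i : ℝ)) =
        (P.map (Int.cast : ℤ → ℝ)).mulVec ξ ∧
      ∀ i, |ξ i - (ζ i : ℝ)| < ε := by
  choose c hc using hrat
  have hPcast : P.map (Int.cast : ℤ → ℝ) = (P.map (Int.cast : ℤ → ℚ)).map (↑) := by
    ext; simp
  obtain ⟨ζ, hζ₀, hPζ, hζξ⟩ :=
    (P.map (Int.cast : ℤ → ℚ)).exists_nonneg_rat_mulVec_eq_near c hξ (hPcast ▸ funext hc) hε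
  refine ⟨ζ, hζ₀, funext fun j => ?_, hζξ⟩
  rw [hc j, hPcast, ← hPζ]
  exact ((Rat.castHom ℝ).map_mulVec _ ζ j).symm
end

section
/- Let P be a rational matrix defining a surjective linear map ℝ^m → ℝ^n (m ≥ n, rank P = n), and let σ > 0. Then for every ε with 0 < ε < σ there exists δ > 0 such that: for all ξ ∈ ℝ^m and κ ∈ ℝ^n, if every entry of ξ is greater than σ and ‖κ − P ξ‖_∞ < δ, then there exists ζ ∈ ℝ^m with all entries nonnegative such that P ζ = κ and ‖ξ − ζ‖_∞ < ε. -/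
/-! Since `P` is surjective, the open mapping theorem gives `C` with every `y` having a preimage
of norm at most `C ‖y‖`. Correcting `ξ` by a preimage of `κ - P ξ` therefore moves it by less
than `ε` once `δ = ε / C`, and a vector within `ε < σ` of one whose entries exceed `σ` has
positive entries. -/

open Function

theorem ContinuousLinearMap.exists_preimage_norm_sub_lt {𝕜 E F : Type*}
    [NontriviallyNormedField 𝕜] [NormedAddCommGroup E] [NormedSpace 𝕜 E] [CompleteSpace E]
    [NormedAddCommGroup F] [NormedSpace 𝕜 F] [CompleteSpace F]
    (f : E →L[𝕜] F) (hf : Surjective f) {ε : ℝ} (hε : 0 < ε) :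
    ∃ δ > 0, ∀ x y, ‖y - f x‖ < δ → ∃ x', f x' = y ∧ ‖x - x'‖ < ε := by
  obtain ⟨C, hC, hpre⟩ := f.exists_preimage_norm_le hf
  refine ⟨ε / C, by positivity, fun x y hxy => ?_⟩
  obtain ⟨z, hz, hz_norm⟩ := hpre (y - f x)
  refine ⟨x + z, by rw [map_add, hz, add_sub_cancel], ?_⟩
  calc ‖x - (x + z)‖ = ‖z‖ := by rw [sub_add_cancel_left, norm_neg]
    _ ≤ C * ‖y - f x‖ := hz_norm
    _ < C * (ε / C) := by gcongr
    _ = ε := mul_div_cancel₀ ε hC.ne'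

theorem pos_of_forall_lt_of_norm_sub_lt {ι : Type*} [Fintype ι] {σ : ℝ} {ξ ζ : ι → ℝ}
    (hξ : ∀ i, σ < ξ i) (hζ : ‖ξ - ζ‖ < σ) (i : ι) : 0 < ζ i := by
  have hi : |ξ i - ζ i| < σ := (norm_le_pi_norm (ξ - ζ) i).trans_lt hζ
  linarith [hξ i, (abs_lt.1 hi).2]

theorem stmt_5_general (m n : ℕ) (P : Matrix (Fin n) (Fin m) ℚ)
    (hsurj : Function.Surjective fun x : Fin m → ℝ => (P.map (Rat.cast : ℚ → ℝ)).mulVec x)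
    (σ : ℝ) (ε : ℝ) (hε0 : 0 < ε) (hεσ : ε < σ) :
    ∃ δ > 0, ∀ (ξ : Fin m → ℝ) (κ : Fin n → ℝ),
      (∀ i, σ < ξ i) → ‖κ - (P.map (Rat.cast : ℚ → ℝ)).mulVec ξ‖ < δ →
      ∃ ζ : Fin m → ℝ, (∀ i, 0 ≤ ζ i) ∧
        (P.map (Rat.cast : ℚ → ℝ)).mulVec ζ = κ ∧ ‖ξ - ζ‖ < ε := by
  let A : (Fin m → ℝ) →L[ℝ] (Fin n → ℝ) :=
    LinearMap.toContinuousLinearMap (P.map (Rat.cast : ℚ → ℝ)).mulVecLin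
  obtain ⟨δ, hδ, hA⟩ := A.exists_preimage_norm_sub_lt hsurj hε0
  refine ⟨δ, hδ, fun ξ κ hξ hκ => ?_⟩
  obtain ⟨ζ, hζ, hξζ⟩ := hA ξ κ hκ
  exact ⟨ζ, fun i => (pos_of_forall_lt_of_norm_sub_lt hξ (hξζ.trans hεσ) i).le, hζ, hξζ⟩

/-- Perturbation lemma: for a surjective rational matrix `P : ℝ^m → ℝ^n` and `0 < ε < σ`,
there is `δ > 0` such that any `ξ` with entries `> σ` and any `κ` with `‖κ - Pξ‖_∞ < δ`
admit a nonnegative `ζ` with `Pζ = κ` and `‖ξ - ζ‖_∞ < ε`. -/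
theorem stmt_5 (m n : ℕ) (P : Matrix (Fin n) (Fin m) ℚ)
    (hsurj : Function.Surjective fun x : Fin m → ℝ => (P.map (Rat.cast : ℚ → ℝ)).mulVec x)
    (σ : ℝ) (hσ : 0 < σ) (ε : ℝ) (hε0 : 0 < ε) (hεσ : ε < σ) :
    ∃ δ > 0, ∀ (ξ : Fin m → ℝ) (κ : Fin n → ℝ),
      (∀ i, σ < ξ i) → ‖κ - (P.map (Rat.cast : ℚ → ℝ)).mulVec ξ‖ < δ →
      ∃ ζ : Fin m → ℝ, (∀ i, 0 ≤ ζ i) ∧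
        (P.map (Rat.cast : ℚ → ℝ)).mulVec ζ = κ ∧ ‖ξ - ζ‖ < ε :=
  stmt_5_general m n P hsurj σ ε hε0 hεσ
end

section
/- (Two-sided marriage lemma.) Let A, B be finite subsets of a metric space with distinguished subsets A₁ ⊆ A and B₁ ⊆ B, and let ε > 0. Suppose that for every X ⊆ A₁ the number of y ∈ B with dist(y, X) < ε is at least #X, and for every Y ⊆ B₁ the number of x ∈ A with dist(x, Y) < ε is at least #Y. Then there exist subsets A₂ with A₁ ⊆ A₂ ⊆ A and B₂ with B₁ ⊆ B₂ ⊆ B, and a bijection f : A₂ → B₂ such that dist(a, f(a)) < ε for all a ∈ A₂. -/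
/-!
By Hall's theorem the two one-sided conditions give injections `g : A₁ → B` and `h : B₁ → A`
moving points by less than `ε`. They are combined as in the Mendelsohn–Dulmage theorem, by a
Schröder–Bernstein argument: let `C ⊆ B₁` consist of the points reached from `B₁ \ g(A₁)` by
alternately applying `h` and `g` without leaving `A₁` and `B₁`. Matching `h(C)` back to `C` by
`h⁻¹` and the rest of `A₁` by `g` gives a bijection from `A₁ ∪ h(C)` onto a set containing `B₁`.
-/

open Set Function

section MendelsohnDulmage

variable {α β : Type*} (g : α → β) (h : β → α) (A₁ : Set α) (B₁ : Set β)

inductive AlternatingChain : Set β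
  | start {b : β} : b ∈ B₁ → b ∉ g '' A₁ → AlternatingChain b
  | step {b : β} : AlternatingChain b → h b ∈ A₁ → g (h b) ∈ B₁ → AlternatingChain (g (h b))

open scoped Classical in
noncomputable def chainMatching (a : α) : β :=
  if ha : a ∈ h '' AlternatingChain g h A₁ B₁ then ha.choose else g a

variable {g h A₁ B₁} {a : α} {b : β}

theorem AlternatingChain.subset : AlternatingChain g h A₁ B₁ ⊆ B₁ := by
  rintro _ (⟨hb, -⟩ | ⟨-, -, hb⟩) <;> exact hb

theorem mem_image_alternatingChain_of_apply_mem (hg : InjOn g A₁) (ha : a ∈ A₁)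
    (hC : g a ∈ AlternatingChain g h A₁ B₁) : a ∈ h '' AlternatingChain g h A₁ B₁ := by
  generalize hb : g a = b at hC
  cases hC with
  | start _ hb' => exact absurd ⟨a, ha, hb⟩ hb'
  | step hc hhc _ => exact ⟨_, hc, (hg ha hhc hb).symm⟩

theorem exists_apply_eq_of_notMem_alternatingChain (hb : b ∈ B₁)
    (hC : b ∉ AlternatingChain g h A₁ B₁) :
    ∃ a ∈ A₁ \ h '' AlternatingChain g h A₁ B₁, g a = b := by
  obtain ⟨a, ha, rfl⟩ : b ∈ g '' A₁ := by
    by_contra hb'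
    exact hC (AlternatingChain.start hb hb')
  refine ⟨a, ⟨ha, ?_⟩, rfl⟩
  rintro ⟨c, hc, rfl⟩
  exact hC (AlternatingChain.step hc ha hb)

theorem chainMatching_of_mem (ha : a ∈ h '' AlternatingChain g h A₁ B₁) :
    chainMatching g h A₁ B₁ a ∈ AlternatingChain g h A₁ B₁ ∧
      h (chainMatching g h A₁ B₁ a) = a := by
  rw [chainMatching, dif_pos ha]
  exact ha.choose_spec

theorem chainMatching_of_notMem (ha : a ∉ h '' AlternatingChain g h A₁ B₁) :
    chainMatching g h A₁ B₁ a = g a := by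
  rw [chainMatching, dif_neg ha]

theorem injOn_chainMatching (hg : InjOn g A₁) :
    InjOn (chainMatching g h A₁ B₁) (h '' AlternatingChain g h A₁ B₁ ∪ A₁) := by
  rw [← union_sdiff_self, injOn_union disjoint_sdiff_right]
  have hleft : LeftInvOn h (chainMatching g h A₁ B₁) (h '' AlternatingChain g h A₁ B₁) :=
    fun a ha => (chainMatching_of_mem ha).2
  have hEq : EqOn (chainMatching g h A₁ B₁) g (A₁ \ h '' AlternatingChain g h A₁ B₁) :=
    fun a ha => chainMatching_of_notMem ha.2
  refine ⟨hleft.injOn, hEq.injOn_iff.2 (hg.mono sdiff_subset), ?_⟩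
  rintro a ha a' ⟨ha'A, ha'C⟩ heq
  rw [hEq ⟨ha'A, ha'C⟩] at heq
  exact ha'C (mem_image_alternatingChain_of_apply_mem hg ha'A (heq ▸ (chainMatching_of_mem ha).1))

theorem subset_image_chainMatching (hh : InjOn h B₁) :
    B₁ ⊆ chainMatching g h A₁ B₁ '' (h '' AlternatingChain g h A₁ B₁ ∪ A₁) := by
  intro b hb
  by_cases hC : b ∈ AlternatingChain g h A₁ B₁
  · have hhb : h b ∈ h '' AlternatingChain g h A₁ B₁ := mem_image_of_mem h hC
    obtain ⟨hmem, hinv⟩ := chainMatching_of_mem hhb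
    exact ⟨h b, .inl hhb, hh (AlternatingChain.subset hmem) hb hinv⟩
  · obtain ⟨a, ⟨ha, haC⟩, rfl⟩ := exists_apply_eq_of_notMem_alternatingChain hb hC
    exact ⟨a, .inr ha, chainMatching_of_notMem haC⟩

theorem chainMatching_spec (ha : a ∈ h '' AlternatingChain g h A₁ B₁ ∪ A₁) :
    (chainMatching g h A₁ B₁ a ∈ B₁ ∧ h (chainMatching g h A₁ B₁ a) = a) ∨
      (a ∈ A₁ ∧ chainMatching g h A₁ B₁ a = g a) := by
  by_cases haC : a ∈ h '' AlternatingChain g h A₁ B₁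
  · obtain ⟨hmem, hinv⟩ := chainMatching_of_mem haC
    exact .inl ⟨AlternatingChain.subset hmem, hinv⟩
  · exact .inr ⟨ha.resolve_left haC, chainMatching_of_notMem haC⟩

theorem exists_bijOn_of_injOn (hg : InjOn g A₁) (hh : InjOn h B₁) {r : α → β → Prop}
    (hgr : ∀ a ∈ A₁, r a (g a)) (hhr : ∀ b ∈ B₁, r (h b) b) :
    ∃ (A₂ : Set α) (B₂ : Set β) (f : α → β), A₁ ⊆ A₂ ∧ A₂ ⊆ A₁ ∪ h '' B₁ ∧ B₁ ⊆ B₂ ∧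
      B₂ ⊆ B₁ ∪ g '' A₁ ∧ BijOn f A₂ B₂ ∧ ∀ a ∈ A₂, r a (f a) := by
  refine ⟨_, _, chainMatching g h A₁ B₁, subset_union_right, ?_, subset_image_chainMatching hh,
    image_subset_iff.2 fun a ha => ?_, (injOn_chainMatching hg).bijOn_image, fun a ha => ?_⟩
  · exact union_subset (subset_union_of_subset_right (image_mono AlternatingChain.subset) _)
      subset_union_left
  · rcases chainMatching_spec ha with ⟨hB, -⟩ | ⟨hA, heq⟩
    · exact .inl hB
    · exact .inr ⟨a, hA, heq.symm⟩
  · rcases chainMatching_spec ha with ⟨hB, hinv⟩ | ⟨hA, heq⟩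
    · simpa only [hinv] using hhr _ hB
    · simpa only [heq] using hgr a hA

end MendelsohnDulmage

-- Source and target share a type so that `g` can be extended off `X` by the identity.
open scoped Classical in
theorem Finset.exists_injOn_of_forall_card_le_card_filter {α : Type*} {X Y : Finset α}
    {r : α → α → Prop} (hall : ∀ S ⊆ X, S.card ≤ (Y.filter fun y => ∃ x ∈ S, r x y).card) :
    ∃ g : α → α, InjOn g X ∧ ∀ x ∈ X, g x ∈ Y ∧ r x (g x) := by
  obtain ⟨f, hf_inj, hf⟩ := (Finset.all_card_le_biUnion_card_iff_exists_injective
    fun x : X => Y.filter (r x)).1 fun s => by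
      have hS := hall (s.map (Embedding.subtype _)) fun x hx => property_of_mem_map_subtype s hx
      convert hS using 3
      · simp
      · ext y
        simp only [mem_biUnion, mem_filter, mem_map, Embedding.coe_subtype]
        constructor
        · rintro ⟨a, ha, hy, hr⟩
          exact ⟨hy, a, ⟨a, ha, rfl⟩, hr⟩
        · rintro ⟨hy, _, ⟨a, ha, rfl⟩, hr⟩
          exact ⟨a, ha, hy, hr⟩
  refine ⟨fun a => if ha : a ∈ X then f ⟨a, ha⟩ else a, fun a ha a' ha' heq => ?_, fun a ha => ?_⟩
  · simp only [Finset.mem_coe] at ha ha'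
    simp only [dif_pos ha, dif_pos ha'] at heq
    exact congrArg Subtype.val (hf_inj heq)
  · simpa [dif_pos ha] using hf ⟨a, ha⟩

open scoped Classical in
theorem stmt_7_general {α : Type*} [MetricSpace α] (A B A₁ B₁ : Finset α)
    (hA₁ : A₁ ⊆ A) (hB₁ : B₁ ⊆ B) (ε : ℝ)
    (hA : ∀ X ⊆ A₁, X.card ≤ (B.filter fun y => ∃ x ∈ X, dist y x < ε).card)
    (hB : ∀ Y ⊆ B₁, Y.card ≤ (A.filter fun x => ∃ y ∈ Y, dist x y < ε).card) :
    ∃ A₂ : Finset α, ∃ B₂ : Finset α, A₁ ⊆ A₂ ∧ A₂ ⊆ A ∧ B₁ ⊆ B₂ ∧ B₂ ⊆ B ∧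
      ∃ f : α → α, Set.BijOn f ↑A₂ ↑B₂ ∧ ∀ a ∈ A₂, dist a (f a) < ε := by
  obtain ⟨g, hg_inj, hg⟩ :=
    Finset.exists_injOn_of_forall_card_le_card_filter (r := fun x y => dist y x < ε) hA
  obtain ⟨h, hh_inj, hh⟩ :=
    Finset.exists_injOn_of_forall_card_le_card_filter (r := fun x y => dist y x < ε) hB
  obtain ⟨A₂, B₂, f, hA₁A₂, hA₂, hB₁B₂, hB₂, hf, hdist⟩ :=
    exists_bijOn_of_injOn (r := fun a b => dist a b < ε) hg_inj hh_inj
      (fun a ha => dist_comm a (g a) ▸ (hg a ha).2) (fun b hb => (hh b hb).2)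
  have hA₂A : A₂ ⊆ A := hA₂.trans <| union_subset (by exact_mod_cast hA₁) <|
    image_subset_iff.2 fun b hb => (hh b hb).1
  have hB₂B : B₂ ⊆ B := hB₂.trans <| union_subset (by exact_mod_cast hB₁) <|
    image_subset_iff.2 fun a ha => (hg a ha).1
  have hA₂fin := A.finite_toSet.subset hA₂A
  have hB₂fin := B.finite_toSet.subset hB₂B
  refine ⟨hA₂fin.toFinset, hB₂fin.toFinset, hA₂fin.subset_toFinset.2 hA₁A₂,
    hA₂fin.toFinset_subset.2 hA₂A, hB₂fin.subset_toFinset.2 hB₁B₂, hB₂fin.toFinset_subset.2 hB₂B,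
    f, by simpa using hf, fun a ha => hdist a (hA₂fin.mem_toFinset.1 ha)⟩

open scoped Classical in
/-- Two-sided marriage lemma (Gong): with marriage conditions for `A₁ ⊆ A` against `B`
and for `B₁ ⊆ B` against `A`, there are intermediate sets `A₁ ⊆ A₂ ⊆ A`, `B₁ ⊆ B₂ ⊆ B`
which can be matched bijectively within `ε`. -/
theorem stmt_7 {α : Type*} [MetricSpace α] (A B A₁ B₁ : Finset α)
    (hA₁ : A₁ ⊆ A) (hB₁ : B₁ ⊆ B) (ε : ℝ) (hε : 0 < ε)
    (hA : ∀ X ⊆ A₁, X.card ≤ (B.filter fun y => ∃ x ∈ X, dist y x < ε).card)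
    (hB : ∀ Y ⊆ B₁, Y.card ≤ (A.filter fun x => ∃ y ∈ Y, dist x y < ε).card) :
    ∃ A₂ : Finset α, ∃ B₂ : Finset α, A₁ ⊆ A₂ ∧ A₂ ⊆ A ∧ B₁ ⊆ B₂ ∧ B₂ ⊆ B ∧
      ∃ f : α → α, Set.BijOn f ↑A₂ ↑B₂ ∧ ∀ a ∈ A₂, dist a (f a) < ε :=
  stmt_7_general A B A₁ B₁ hA₁ hB₁ ε hA hB
end
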